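/- (Perfect privacy against a corrupted Referee.) For all p, q ∈ ZMod 2, the averaged four-qubit density operator (1/16) · Σ_{(m₂,m₅,s,μ) ∈ (ZMod 2)⁴} v v†, where v = |Z; p+m₂⟩ ⊗ |Z; q+m₅⟩ ⊗ |X; s⟩ ⊗ w_s(p·q + μ) with w₀(c) = |X; c⟩ and w₁(c) = |Y; c⟩, equals (1/16) · I₁₆, the maximally mixed state on four qubits. In particular this average is independent of p and q. -/

import Mathlib

/-!
The Referee's state is a product over the four qubits, and each qubit carries an independent
uniform one-time pad: averaging `|b;c⟩⟨b;c|` over `c` for an orthonormal basis `{|b;0⟩, |b;1⟩}`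
gives the identity (shifting `c` by the secret `p`, `q` or `p·q` does not change the average).
The only correlation, between the third qubit's `s` and the basis of the fourth, is harmless:
for either value of `s` the fourth qubit is already averaged to the identity.
Both `|X;·⟩` and `|Y;·⟩` have the form `(e₀ ± z e₁)/√2` with `‖z‖ = 1`, for which the two
outer products add up to the identity since the cross terms `±z/2` cancel.
-/

open Matrix
open scoped BigOperators

noncomputable section

/-- `(-1)^c` as a complex number, for `c : ZMod 2`. -/
def sgn (c : ZMod 2) : ℂ := if c = 0 then 1 else -1

/-- `|Z;c⟩ = e_c`, the eigenvector of Pauli `Z` with eigenvalue `(−1)^c`. -/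
def ketZ (c : ZMod 2) : ZMod 2 → ℂ := fun d => if d = c then 1 else 0

/-- `|X;c⟩ = (e₀ + (−1)^c e₁)/√2`, the eigenvector of Pauli `X` with eigenvalue `(−1)^c`. -/
def ketX (c : ZMod 2) : ZMod 2 → ℂ :=
  fun d => (Real.sqrt 2 : ℂ)⁻¹ * (if d = 0 then 1 else sgn c)

/-- `|Y;c⟩ = (e₀ + (−1)^c·i·e₁)/√2`, the eigenvector of Pauli `Y` with eigenvalue `(−1)^c`. -/
def ketY (c : ZMod 2) : ZMod 2 → ℂ :=
  fun d => (Real.sqrt 2 : ℂ)⁻¹ * (if d = 0 then 1 else sgn c * Complex.I)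

/-- Tensor product of a family of single-qubit vectors. -/
def tensorVec {V : Type*} [Fintype V] (f : V → (ZMod 2 → ℂ)) : (V → ZMod 2) → ℂ :=
  fun x => ∏ i, f i (x i)

/-- Tensor (Kronecker) product of a family of single-qubit operators. -/
def tensorOp {V : Type*} [Fintype V] (f : V → Matrix (ZMod 2) (ZMod 2) ℂ) :
    Matrix (V → ZMod 2) (V → ZMod 2) ℂ :=
  fun x y => ∏ i, f i (x i) (y i)

/-- The rank-one outer product `|ψ⟩⟨ψ| = v v†`. -/
def outer {α : Type*} (ψ : α → ℂ) : Matrix α α ℂ := fun x y => ψ x * star (ψ y)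

/-- `ketX c = unbiasedKet (sgn c)` and `ketY c = unbiasedKet (sgn c * I)` hold by `rfl`. -/
def unbiasedKet (z : ℂ) : ZMod 2 → ℂ := fun d => (Real.sqrt 2 : ℂ)⁻¹ * (if d = 0 then 1 else z)

lemma sum_zmod_two {M : Type*} [AddCommMonoid M] (f : ZMod 2 → M) : ∑ c, f c = f 0 + f 1 :=
  Fin.sum_univ_two f

lemma inv_sqrt_two_mul_star : (Real.sqrt 2 : ℂ)⁻¹ * star (Real.sqrt 2 : ℂ)⁻¹ = 2⁻¹ := by
  rw [star_inv₀, Complex.star_def, Complex.conj_ofReal, ← mul_inv, ← Complex.ofReal_mul,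
    Real.mul_self_sqrt zero_le_two, Complex.ofReal_ofNat]

lemma zmod_two_eq_zero_or_one (a : ZMod 2) : a = 0 ∨ a = 1 := by
  revert a
  decide

lemma outer_unbiasedKet_add_neg (z : ℂ) (hz : ‖z‖ = 1) :
    outer (unbiasedKet z) + outer (unbiasedKet (-z)) = 1 := by
  ext a b
  have key (u v : ℂ) :
      (Real.sqrt 2 : ℂ)⁻¹ * u * star ((Real.sqrt 2 : ℂ)⁻¹ * v) = 2⁻¹ * (u * star v) := by
    rw [star_mul', ← inv_sqrt_two_mul_star]
    ring
  simp only [Matrix.add_apply, outer, unbiasedKet, one_apply, key]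
  rcases zmod_two_eq_zero_or_one a with rfl | rfl <;>
    rcases zmod_two_eq_zero_or_one b with rfl | rfl <;>
    simp [Complex.mul_conj, Complex.normSq_eq_norm_sq, hz] <;> ring

lemma sum_outer_unbiasedKet_sgn_mul (z : ℂ) (hz : ‖z‖ = 1) :
    ∑ c : ZMod 2, outer (unbiasedKet (sgn c * z)) = 1 := by
  rw [sum_zmod_two]
  simpa [sgn] using outer_unbiasedKet_add_neg z hz

lemma sum_outer_ketZ : ∑ c, outer (ketZ c) = 1 := by
  ext a b
  simp [outer, ketZ, Matrix.sum_apply, one_apply]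

lemma sum_outer_ketX : ∑ c, outer (ketX c) = 1 := by
  have h := sum_outer_unbiasedKet_sgn_mul 1 norm_one
  simp only [mul_one] at h
  exact h

lemma sum_outer_ketY : ∑ c, outer (ketY c) = 1 :=
  sum_outer_unbiasedKet_sgn_mul Complex.I Complex.norm_I

lemma outer_tensorVec {V : Type*} [Fintype V] (f : V → ZMod 2 → ℂ) :
    outer (tensorVec f) = tensorOp fun i => outer (f i) := by
  ext x y
  simp [outer, tensorVec, tensorOp, Finset.prod_mul_distrib]

lemma tensorOp_one {V : Type*} [Fintype V] :
    tensorOp (fun _ : V => (1 : Matrix (ZMod 2) (ZMod 2) ℂ)) = 1 := by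
  ext x y
  by_cases h : x = y
  · subst h
    simp [tensorOp]
  · obtain ⟨i, hi⟩ := Function.ne_iff.mp h
    simp only [tensorOp, one_apply_ne h]
    exact Finset.prod_eq_zero (Finset.mem_univ i) (one_apply_ne hi)

lemma sum_outer_tensorVec_fin_four {α β γ δ : Type*} [Fintype α] [Fintype β] [Fintype γ]
    [Fintype δ] (a : α → ZMod 2 → ℂ) (b : β → ZMod 2 → ℂ) (c : γ → ZMod 2 → ℂ)
    (d : γ → δ → ZMod 2 → ℂ) (E : Matrix (ZMod 2) (ZMod 2) ℂ)
    (hd : ∀ s, ∑ μ, outer (d s μ) = E) :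
    ∑ t : α × β × γ × δ, outer (tensorVec ![a t.1, b t.2.1, c t.2.2.1, d t.2.2.1 t.2.2.2])
      = tensorOp ![∑ i, outer (a i), ∑ j, outer (b j), ∑ s, outer (c s), E] := by
  ext x y
  simp only [Matrix.sum_apply, outer_tensorVec, tensorOp, Fin.prod_univ_four, cons_val_zero,
    cons_val_one, cons_val_two, cons_val_three, head_cons, tail_cons, mul_assoc]
  simp only [Fintype.sum_prod_type, ← Finset.mul_sum, ← Finset.sum_mul, ← Matrix.sum_apply, hd]

/-- Perfect privacy against a corrupted Referee: averaging the pure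
state `v = |Z; p+m₂⟩ ⊗ |Z; q+m₅⟩ ⊗ |X; s⟩ ⊗ w_s(p·q + μ)` (with `w₀ = |X;·⟩`,
`w₁ = |Y;·⟩`) over the uniformly random pads `(m₂, m₅, s, μ)` yields the maximally
mixed state `(1/16)·I₁₆` on four qubits; in particular the average is independent
of `p` and `q`. -/
theorem referee_privacy (p q : ZMod 2) :
    (16 : ℂ)⁻¹ • ∑ t : ZMod 2 × ZMod 2 × ZMod 2 × ZMod 2,
        outer (tensorVec ![ketZ (p + t.1), ketZ (q + t.2.1), ketX t.2.2.1,
          (if t.2.2.1 = 0 then ketX else ketY) (p * q + t.2.2.2)])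
      = (16 : ℂ)⁻¹ • (1 : Matrix (Fin 4 → ZMod 2) (Fin 4 → ZMod 2) ℂ) := by
  have shift (v : ZMod 2 → ZMod 2 → ℂ) (c : ZMod 2) :
      ∑ m, outer (v (c + m)) = ∑ m, outer (v m) :=
    Fintype.sum_equiv (Equiv.addLeft c) _ _ fun _ => rfl
  have hw (s : ZMod 2) : ∑ μ, outer ((if s = 0 then ketX else ketY) (p * q + μ)) = 1 := by
    rw [shift]
    split_ifs
    exacts [sum_outer_ketX, sum_outer_ketY]
  rw [sum_outer_tensorVec_fin_four (fun m => ketZ (p + m)) (fun m => ketZ (q + m)) ketX _ 1 hw,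
    shift, shift, sum_outer_ketZ, sum_outer_ketX, vec_single_eq_const, vecCons_const,
    vecCons_const, vecCons_const, tensorOp_one]
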